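/- For b ≥ 2, let φ = (√(b²+4) - b)/2 be the fractional part of the b-th metallic ratio. Then 0 < φ < 1/2 and the reduced entropy density of the Haros graph of φ, computed from its explicit degree distribution P(2)=φ, P(3)=1-2φ, P(bn+3)=(1-φ)·φⁿ for n ≥ 1 (all other degrees having probability 0), equals (φ·log φ - ∑_{n=1}^{∞} (1-φ)·φⁿ·log((1-φ)·φⁿ)) / φ = -log(1-φ) - ((1+φ)/b)·log φ. -/

import Mathlib

/-!
Since `(1 - φ) φ^(n+1) log((1 - φ) φ^(n+1)) = (1 - φ) φ^(n+1) (log (1 - φ) + (n + 1) log φ)`, the series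
is a combination of the geometric series and its derivative, and sums to
`φ log (1 - φ) + φ / (1 - φ) · log φ` for any `0 < φ < 1`. The quadratic `φ² + bφ - 1 = 0` then
gives `φ / (1 - φ) = (1 + φ) / b`.
-/

open Real

theorem hasSum_mul_pow_succ_mul_log {c x : ℝ} (hc : 0 < c) (hx₀ : 0 < x) (hx₁ : x < 1) :
    HasSum (fun n : ℕ => c * x ^ (n + 1) * log (c * x ^ (n + 1)))
      (c * x / (1 - x) * log c + c * x / (1 - x) ^ 2 * log x) := by
  have hnorm : ‖x‖ < 1 := by rwa [norm_of_nonneg hx₀.le]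
  have hgeom : HasSum (fun n : ℕ => x ^ n) (1 - x)⁻¹ := hasSum_geometric_of_lt_one hx₀.le hx₁
  have hderiv : HasSum (fun n : ℕ => (n : ℝ) * x ^ n) (x / (1 - x) ^ 2) :=
    hasSum_coe_mul_geometric_of_norm_lt_one hnorm
  have hshift : HasSum (fun n : ℕ => ((n + 1 : ℕ) : ℝ) * x ^ (n + 1)) (x / (1 - x) ^ 2) := by
    simpa using (hasSum_nat_add_iff' 1).mpr hderiv
  have hsum := (hgeom.mul_left (c * x * log c)).add (hshift.mul_left (c * log x))
  have hterm : (fun n : ℕ => c * x ^ (n + 1) * log (c * x ^ (n + 1)))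
      = fun n : ℕ => c * x * log c * x ^ n + c * log x * (((n + 1 : ℕ) : ℝ) * x ^ (n + 1)) := by
    funext n
    rw [log_mul hc.ne' (by positivity), log_pow]
    push_cast
    ring
  have hval : c * x / (1 - x) * log c + c * x / (1 - x) ^ 2 * log x
      = c * x * log c * (1 - x)⁻¹ + c * log x * (x / (1 - x) ^ 2) := by
    field_simp
  rwa [hterm, hval]

theorem entropy_density_geometric_tail {x : ℝ} (hx₀ : 0 < x) (hx₁ : x < 1) :
    (x * log x - ∑' n : ℕ, (1 - x) * x ^ (n + 1) * log ((1 - x) * x ^ (n + 1))) / x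
      = -log (1 - x) - x / (1 - x) * log x := by
  have h1x : 0 < 1 - x := sub_pos.mpr hx₁
  rw [(hasSum_mul_pow_succ_mul_log h1x hx₀ hx₁).tsum_eq]
  field_simp
  ring

noncomputable def metallicFrac (b : ℝ) : ℝ := (√(b ^ 2 + 4) - b) / 2

theorem metallicFrac_pos (b : ℝ) : 0 < metallicFrac b := by
  have : b < √(b ^ 2 + 4) :=
    (le_abs_self b).trans_lt (by rw [← sqrt_sq_eq_abs]; exact sqrt_lt_sqrt (sq_nonneg b) (by linarith))
  unfold metallicFrac
  linarith

theorem metallicFrac_lt_half {b : ℝ} (hb : 3 / 2 < b) : metallicFrac b < 1 / 2 := by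
  have : √(b ^ 2 + 4) < b + 1 := by
    rw [sqrt_lt' (by linarith)]
    nlinarith
  unfold metallicFrac
  linarith

theorem metallicFrac_sq_add_mul (b : ℝ) : metallicFrac b ^ 2 + b * metallicFrac b = 1 := by
  have hs : √(b ^ 2 + 4) ^ 2 = b ^ 2 + 4 := sq_sqrt (by positivity)
  unfold metallicFrac
  nlinarith

theorem metallicFrac_div_one_sub {b : ℝ} (hb : 3 / 2 < b) :
    metallicFrac b / (1 - metallicFrac b) = (1 + metallicFrac b) / b := by
  have h1 : 1 - metallicFrac b ≠ 0 := by linarith [metallicFrac_lt_half hb]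
  rw [div_eq_div_iff h1 (by linarith)]
  linear_combination metallicFrac_sq_add_mul b

theorem stmt16 (b : ℕ) (hb : 2 ≤ b) :
    let φ : ℝ := (Real.sqrt ((b : ℝ)^2 + 4) - b) / 2
    0 < φ ∧ φ < 1/2 ∧
    (φ * Real.log φ -
        ∑' n : ℕ, (1 - φ) * φ^(n+1) * Real.log ((1 - φ) * φ^(n+1))) / φ
      = -Real.log (1 - φ) - ((1 + φ) / (b : ℝ)) * Real.log φ := by
  intro φ
  rw [show φ = metallicFrac b from rfl]
  have hb' : (3 / 2 : ℝ) < b := by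
    have : (2 : ℝ) ≤ b := by exact_mod_cast hb
    linarith
  have hpos := metallicFrac_pos b
  have hhalf := metallicFrac_lt_half hb'
  refine ⟨hpos, hhalf, ?_⟩
  rw [entropy_density_geometric_tail hpos (by linarith), metallicFrac_div_one_sub hb']
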